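/- arXiv:2504.18755 — 5 statements merged into one kernel-verified Lean document; each statement's English description precedes it below -/
import Mathlib

section
/- Let ρ̄, ν, ν_T, l, β, C_D be positive real numbers, let k ≥ 0, set μ_T := ν_T/ν, and let σ̄ ∈ ℝ⁶. Define the symmetric 10×10 real matrix M in block form M = [[a·I₆, b·σ̄, 0], [b·σ̄ᵀ, d, 0], [0, 0, e·I₃]], where a = (ρ̄/(ν(μ_T+1)))·(1 + 2βν_T k/ν), b = −2βρ̄ν_T/(ν²(μ_T+1)), d = C_D β ρ̄ ν_T/l², and e = ρ̄/(ν + ν_T). If (4βν_T l²/(ν²(ν_T+ν)))·|σ̄|² < C_D·(1 + 2βν_T k/ν), then M is positive definite. -/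
/- STATEMENT 0: The dissipation matrix `M` of the hyperbolic turbulence model, given in
block form `M = [[a·I₆, b·σ̄, 0], [b·σ̄ᵀ, d, 0], [0, 0, e·I₃]]`, is positive definite
provided `(4βν_T l²/(ν²(ν_T+ν)))·|σ̄|² < C_D·(1 + 2βν_T k/ν)`.
Indices 0–5 correspond to the σ-block, index 6 to the k-block, indices 7–9 to the y-block. -/
set_option maxHeartbeats 4000000 in
theorem dissipation_matrix_posDef
    (ρ ν νT l β CD k : ℝ)
    (hρ : 0 < ρ) (hν : 0 < ν) (hνT : 0 < νT) (hl : 0 < l) (hβ : 0 < β)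
    (hCD : 0 < CD) (hk : 0 ≤ k)
    (μT : ℝ) (hμT : μT = νT / ν)
    (σ : Fin 6 → ℝ)
    (a b d e : ℝ)
    (ha : a = ρ / (ν * (μT + 1)) * (1 + 2 * β * νT * k / ν))
    (hb : b = -(2 * β * ρ * νT) / (ν ^ 2 * (μT + 1)))
    (hd : d = CD * β * ρ * νT / l ^ 2)
    (he : e = ρ / (ν + νT))
    (M : Matrix (Fin 10) (Fin 10) ℝ)
    (hM : M = Matrix.of fun (i j : Fin 10) =>
      if hi : i.val < 6 then
        -- rows of the σ-block
        if hj : j.val < 6 then (if i = j then a else 0)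
        else if j.val = 6 then b * σ ⟨i, hi⟩ else 0
      else if i.val = 6 then
        -- the k-row
        if hj : j.val < 6 then b * σ ⟨j, hj⟩
        else if j.val = 6 then d else 0
      else
        -- the y-block rows
        if 7 ≤ j.val then (if i = j then e else 0) else 0)
    (hcond : 4 * β * νT * l ^ 2 / (ν ^ 2 * (νT + ν)) * (∑ i, σ i ^ 2) <
      CD * (1 + 2 * β * νT * k / ν)) :
    M.PosDef := by
  have hνν : 0 < ν + νT := by linarith
  have hA : 0 < 1 + 2 * β * νT * k / ν := by positivity
  have hμ1 : μT + 1 = (νT + ν) / ν := by rw [hμT]; field_simp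
  have ha' : 0 < a := by
    rw [ha, hμ1]; positivity
  have hd' : 0 < d := by rw [hd]; positivity
  have he' : 0 < e := by rw [he]; positivity
  -- key inequality
  have hS : (∑ i, σ i ^ 2) = σ 0 ^ 2 + σ 1 ^ 2 + σ 2 ^ 2 + σ 3 ^ 2 + σ 4 ^ 2 + σ 5 ^ 2 := by
    simp [Fin.sum_univ_six]
  have hkey : b ^ 2 * (∑ i, σ i ^ 2) < a * d := by
    have hc : 0 < β * ρ ^ 2 * νT / ((νT + ν) * l ^ 2) := by positivity
    have := mul_lt_mul_of_pos_left hcond hc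
    calc b ^ 2 * (∑ i, σ i ^ 2)
        = β * ρ ^ 2 * νT / ((νT + ν) * l ^ 2) *
          (4 * β * νT * l ^ 2 / (ν ^ 2 * (νT + ν)) * (∑ i, σ i ^ 2)) := by
          rw [hb, hμ1]; field_simp; ring
      _ < β * ρ ^ 2 * νT / ((νT + ν) * l ^ 2) * (CD * (1 + 2 * β * νT * k / ν)) := this
      _ = a * d := by rw [ha, hd, hμ1]; field_simp
  refine Matrix.posDef_iff_dotProduct_mulVec.mpr ⟨?_, ?_⟩
  · rw [hM]
    ext i j
    simp only [Matrix.conjTranspose_apply, Matrix.of_apply, star_trivial]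
    split_ifs <;> first | rfl | omega
  · intro x hx
    have hQ : dotProduct (star x) (M.mulVec x) =
        a * (x 0 ^ 2 + x 1 ^ 2 + x 2 ^ 2 + x 3 ^ 2 + x 4 ^ 2 + x 5 ^ 2)
        + 2 * b * x 6 * (σ 0 * x 0 + σ 1 * x 1 + σ 2 * x 2 + σ 3 * x 3 + σ 4 * x 4 + σ 5 * x 5)
        + d * x 6 ^ 2 + e * (x 7 ^ 2 + x 8 ^ 2 + x 9 ^ 2) := by
      subst hM
      simp only [dotProduct, Matrix.mulVec, Matrix.of_apply, star_trivial,
        Pi.star_apply, Fin.sum_univ_succ, Fin.sum_univ_zero, Fin.val_succ, Fin.val_zero]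
      norm_num [Fin.ext_iff, Fin.succ]
      simp only [show (⟨2, by omega⟩ : Fin 10) = 2 from rfl, show (⟨3, by omega⟩ : Fin 10) = 3 from rfl, show (⟨4, by omega⟩ : Fin 10) = 4 from rfl, show (⟨5, by omega⟩ : Fin 10) = 5 from rfl, show (⟨6, by omega⟩ : Fin 10) = 6 from rfl, show (⟨7, by omega⟩ : Fin 10) = 7 from rfl, show (⟨8, by omega⟩ : Fin 10) = 8 from rfl, show (⟨9, by omega⟩ : Fin 10) = 9 from rfl, show (⟨2, by omega⟩ : Fin 6) = 2 from rfl, show (⟨3, by omega⟩ : Fin 6) = 3 from rfl, show (⟨4, by omega⟩ : Fin 6) = 4 from rfl, show (⟨5, by omega⟩ : Fin 6) = 5 from rfl]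
      ring
    rw [hQ]
    have hS' : b ^ 2 * (σ 0 ^ 2 + σ 1 ^ 2 + σ 2 ^ 2 + σ 3 ^ 2 + σ 4 ^ 2 + σ 5 ^ 2) < a * d := by
      rw [← hS]; exact hkey
    by_cases h6 : x 6 = 0
    · obtain ⟨i, hi⟩ := Function.ne_iff.mp hx
      have hxi : 0 < x i ^ 2 := lt_of_le_of_ne (sq_nonneg _) (Ne.symm (pow_ne_zero 2 hi))
      rw [h6]
      fin_cases i <;> simp only [Fin.isValue, Fin.mk_zero, Fin.mk_one, show (⟨2, by omega⟩ : Fin 10) = 2 from rfl, show (⟨3, by omega⟩ : Fin 10) = 3 from rfl, show (⟨4, by omega⟩ : Fin 10) = 4 from rfl, show (⟨5, by omega⟩ : Fin 10) = 5 from rfl, show (⟨6, by omega⟩ : Fin 10) = 6 from rfl, show (⟨7, by omega⟩ : Fin 10) = 7 from rfl, show (⟨8, by omega⟩ : Fin 10) = 8 from rfl, show (⟨9, by omega⟩ : Fin 10) = 9 from rfl] at hxi hi ⊢ <;>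
        first
        | (exact absurd h6 hi)
        | linarith [mul_pos ha' hxi, mul_pos he' hxi,
            mul_nonneg ha'.le (sq_nonneg (x 0)), mul_nonneg ha'.le (sq_nonneg (x 1)),
            mul_nonneg ha'.le (sq_nonneg (x 2)), mul_nonneg ha'.le (sq_nonneg (x 3)),
            mul_nonneg ha'.le (sq_nonneg (x 4)), mul_nonneg ha'.le (sq_nonneg (x 5)),
            mul_nonneg he'.le (sq_nonneg (x 7)), mul_nonneg he'.le (sq_nonneg (x 8)),
            mul_nonneg he'.le (sq_nonneg (x 9))]
    · have h62 : 0 < x 6 ^ 2 := lt_of_le_of_ne (sq_nonneg _) (Ne.symm (pow_ne_zero 2 h6))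
      have hid : a * (a * (x 0 ^ 2 + x 1 ^ 2 + x 2 ^ 2 + x 3 ^ 2 + x 4 ^ 2 + x 5 ^ 2)
          + 2 * b * x 6 * (σ 0 * x 0 + σ 1 * x 1 + σ 2 * x 2 + σ 3 * x 3 + σ 4 * x 4 + σ 5 * x 5)
          + d * x 6 ^ 2 + e * (x 7 ^ 2 + x 8 ^ 2 + x 9 ^ 2)) =
          (a * x 0 + b * σ 0 * x 6) ^ 2 + (a * x 1 + b * σ 1 * x 6) ^ 2
          + (a * x 2 + b * σ 2 * x 6) ^ 2 + (a * x 3 + b * σ 3 * x 6) ^ 2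
          + (a * x 4 + b * σ 4 * x 6) ^ 2 + (a * x 5 + b * σ 5 * x 6) ^ 2
          + (a * d - b ^ 2 * (σ 0 ^ 2 + σ 1 ^ 2 + σ 2 ^ 2 + σ 3 ^ 2 + σ 4 ^ 2 + σ 5 ^ 2)) * x 6 ^ 2
          + a * e * (x 7 ^ 2 + x 8 ^ 2 + x 9 ^ 2) := by ring
      have hpos : 0 < a * (a * (x 0 ^ 2 + x 1 ^ 2 + x 2 ^ 2 + x 3 ^ 2 + x 4 ^ 2 + x 5 ^ 2)
          + 2 * b * x 6 * (σ 0 * x 0 + σ 1 * x 1 + σ 2 * x 2 + σ 3 * x 3 + σ 4 * x 4 + σ 5 * x 5)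
          + d * x 6 ^ 2 + e * (x 7 ^ 2 + x 8 ^ 2 + x 9 ^ 2)) := by
        rw [hid]
        have h1 := mul_pos (sub_pos.mpr hS') h62
        have h2 : 0 ≤ a * e * (x 7 ^ 2 + x 8 ^ 2 + x 9 ^ 2) := by positivity
        linarith [sq_nonneg (a * x 0 + b * σ 0 * x 6), sq_nonneg (a * x 1 + b * σ 1 * x 6),
          sq_nonneg (a * x 2 + b * σ 2 * x 6), sq_nonneg (a * x 3 + b * σ 3 * x 6),
          sq_nonneg (a * x 4 + b * σ 4 * x 6), sq_nonneg (a * x 5 + b * σ 5 * x 6)]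
      rcases mul_pos_iff.mp hpos with ⟨_, h⟩ | ⟨h, _⟩
      · exact h
      · exact absurd ha' (not_lt.2 h.le)
end

section
/- Let ε, q, ρ, α₁, α₂, α₃ be positive real numbers, ξ ∈ ℝ, u ∈ ℝ³ and ζ ∈ ℝ³. Order the 14 state components as (φ, u₁, u₂, u₃, σ₁₁, σ₁₂, σ₁₃, σ₂₂, σ₂₃, σ₃₃, k, y₁, y₂, y₃), and define the 14×14 real matrix A(ζ) := (u·ζ)·I₁₄ + B(ζ), where B(ζ) has the block entries B[φ,u] = (1/(εq))ζᵀ, B[u,φ] = (1/(ερ))ζ, B[u,σ] = (1/(√ε·ρ))·C(ζ), B[u,k] = (2/(3ρ))ζ, B[σ,u] = (1/(√ε·α₁ρ))·D(ζ), B[k,u] = (2/(3α₂ρ))ζᵀ, B[k,y] = (ξ/(√ε·α₂α₃ρ))ζᵀ, B[y,k] = (ξ/(√ε·ρ))ζ, and all other blocks zero; here C(ζ) is the 3×6 matrix with rows (ζ₁, ζ₂, ζ₃, 0, 0, 0), (0, ζ₁, 0, ζ₂, ζ₃, 0), (0, 0, ζ₁, 0, ζ₂, ζ₃) and D(ζ)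 is the 6×3 matrix with rows (ζ₁, 0, 0), (ζ₂/2, ζ₁/2, 0), (ζ₃/2, 0, ζ₁/2), (0, ζ₂, 0), (0, ζ₃/2, ζ₂/2), (0, 0, ζ₃). Define A₀ := diag(q/ρ, I₃, α₁·diag(1, 2, 2, 1, 2, 1), α₂, (1/α₃)·I₃). Then A₀ is symmetric positive definite and the product A₀·A(ζ) is a symmetric matrix. -/
open Matrix

noncomputable section

/- STATEMENT 5: The symbol `A(ζ) = (u·ζ)I₁₄ + B(ζ)` of the rescaled hyperbolic
turbulence model, in the state ordering
`(φ, u₁, u₂, u₃, σ₁₁, σ₁₂, σ₁₃, σ₂₂, σ₂₃, σ₃₃, k, y₁, y₂, y₃)`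
(indices 0, 1–3, 4–9, 10, 11–13), is symmetrized by
`A₀ = diag(q/ρ, I₃, α₁·diag(1,2,2,1,2,1), α₂, (1/α₃)I₃)`:
`A₀` is symmetric positive definite and `A₀·A(ζ)` is symmetric. -/
set_option maxHeartbeats 40000000 in
theorem rescaled_model_symmetrizable
    (ε q ρ α₁ α₂ α₃ ξ : ℝ)
    (hε : 0 < ε) (hq : 0 < q) (hρ : 0 < ρ)
    (hα₁ : 0 < α₁) (hα₂ : 0 < α₂) (hα₃ : 0 < α₃)
    (u ζ : Fin 3 → ℝ)
    (z : ℕ → ℝ) (hz : z = fun n => if h : n < 3 then ζ ⟨n, h⟩ else 0)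
    (Cf : ℕ → ℕ → ℝ)
    (hCf : Cf = fun r c =>
      if r = 0 then (if c = 0 then z 0 else if c = 1 then z 1 else if c = 2 then z 2 else 0)
      else if r = 1 then (if c = 1 then z 0 else if c = 3 then z 1 else if c = 4 then z 2 else 0)
      else if r = 2 then (if c = 2 then z 0 else if c = 4 then z 1 else if c = 5 then z 2 else 0)
      else 0)
    (Df : ℕ → ℕ → ℝ)
    (hDf : Df = fun r c =>
      if r = 0 then (if c = 0 then z 0 else 0)
      else if r = 1 then (if c = 0 then z 1 / 2 else if c = 1 then z 0 / 2 else 0)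
      else if r = 2 then (if c = 0 then z 2 / 2 else if c = 2 then z 0 / 2 else 0)
      else if r = 3 then (if c = 1 then z 1 else 0)
      else if r = 4 then (if c = 1 then z 2 / 2 else if c = 2 then z 1 / 2 else 0)
      else if r = 5 then (if c = 2 then z 2 else 0)
      else 0)
    (B : Matrix (Fin 14) (Fin 14) ℝ)
    (hB : B = Matrix.of fun (i j : Fin 14) =>
      if i.val = 0 ∧ 1 ≤ j.val ∧ j.val ≤ 3 then (1 / (ε * q)) * z (j.val - 1)
      else if 1 ≤ i.val ∧ i.val ≤ 3 ∧ j.val = 0 then (1 / (ε * ρ)) * z (i.val - 1)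
      else if 1 ≤ i.val ∧ i.val ≤ 3 ∧ 4 ≤ j.val ∧ j.val ≤ 9 then
        (1 / (Real.sqrt ε * ρ)) * Cf (i.val - 1) (j.val - 4)
      else if 1 ≤ i.val ∧ i.val ≤ 3 ∧ j.val = 10 then (2 / (3 * ρ)) * z (i.val - 1)
      else if 4 ≤ i.val ∧ i.val ≤ 9 ∧ 1 ≤ j.val ∧ j.val ≤ 3 then
        (1 / (Real.sqrt ε * α₁ * ρ)) * Df (i.val - 4) (j.val - 1)
      else if i.val = 10 ∧ 1 ≤ j.val ∧ j.val ≤ 3 then (2 / (3 * α₂ * ρ)) * z (j.val - 1)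
      else if i.val = 10 ∧ 11 ≤ j.val then
        (ξ / (Real.sqrt ε * α₂ * α₃ * ρ)) * z (j.val - 11)
      else if 11 ≤ i.val ∧ j.val = 10 then (ξ / (Real.sqrt ε * ρ)) * z (i.val - 11)
      else 0)
    (A : Matrix (Fin 14) (Fin 14) ℝ)
    (hA : A = (u ⬝ᵥ ζ) • (1 : Matrix (Fin 14) (Fin 14) ℝ) + B)
    (A₀ : Matrix (Fin 14) (Fin 14) ℝ)
    (hA₀ : A₀ = Matrix.diagonal
      ![q / ρ, 1, 1, 1, α₁, 2 * α₁, 2 * α₁, α₁, 2 * α₁, α₁, α₂, 1 / α₃, 1 / α₃, 1 / α₃]) :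
    A₀.IsSymm ∧ A₀.PosDef ∧ (A₀ * A).IsSymm := by
  subst hz hCf hDf hB hA hA₀
  have hs : Real.sqrt ε ≠ 0 := ne_of_gt (Real.sqrt_pos.mpr hε)
  refine ⟨Matrix.isSymm_diagonal _, ?_, ?_⟩
  · refine Matrix.posDef_diagonal_iff.mpr fun i => ?_
    fin_cases i
    · exact div_pos hq hρ
    · exact one_pos
    · exact one_pos
    · exact one_pos
    · exact hα₁
    · exact mul_pos two_pos hα₁
    · exact mul_pos two_pos hα₁
    · exact hα₁
    · exact mul_pos two_pos hα₁
    · exact hα₁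
    · exact hα₂
    · exact div_pos one_pos hα₃
    · exact div_pos one_pos hα₃
    · exact div_pos one_pos hα₃
  · rw [Matrix.IsSymm]
    ext i j
    rw [Matrix.transpose_apply, Matrix.diagonal_mul, Matrix.diagonal_mul,
        Matrix.add_apply, Matrix.add_apply, Matrix.smul_apply, Matrix.smul_apply]
    rcases eq_or_ne i j with rfl | hij
    · rfl
    · rw [Matrix.one_apply_ne hij, Matrix.one_apply_ne hij.symm, smul_zero, zero_add,
        zero_add]
      fin_cases i <;> fin_cases j <;>
        simp +decide only [Matrix.of_apply, reduceIte, reduceDIte,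
          Matrix.cons_val_zero, Matrix.cons_val_one, Matrix.head_cons,
          Matrix.cons_val_succ, mul_zero, zero_mul, Matrix.cons_val_succ', Matrix.cons_val_zero'] <;>
        field_simp <;> ring
end
end

section
/- Let ρ₀ > 0, ν, l, C_D, ξ, α₂, α₃, β > 0 with p = p(ρ) a smooth strictly increasing function, p₀ := p(ρ₀), ρ(·) the inverse of p, and q(p) := [ρ(p)·p′(ρ(p))]⁻¹. Let (u, π, k) be C² fields on ℝ³ × [0,T] with k > 0 solving the incompressible limit system: ∇·u = 0; ρ₀(∂_t u + u·∇u) + ∇·σ + ∇π + (2/3)∇k = 0 with ρ₀σ := −(1/2)(ν_T + ν)(∇u + (∇u)ᵀ); ∂_t k + u·∇k + (ξ/(α₂α₃ρ₀))∇·y = (2β/α₂)·(ν_T/(ν_T+ν)²)·(σ : σ) − (βC_D/(α₂ l))·k^{3/2} with ρ₀y := −ξα₃(ν_T + ν)∇k, where ν_T := l√k. For ε ∈ (0,1] define φ_ε := επ, u_ε := u, σ_ε := −(√ε/(2ρ₀))(l√k + ν)(∇u + (∇u)ᵀ), k_ε := k, y_ε := −(√ε ξ α₃/ρ₀)(l√k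 + ν)∇k, q_ε := q(p₀ + ε²π) and ρ_ε := ρ(p₀ + ε²π). Then the following five identities hold pointwise: (1) ∂_t φ_ε + u_ε·∇φ_ε + (1/(ε q_ε))∇·u_ε = ε(∂_t π + u·∇π); (2) ∂_t u_ε + u_ε·∇u_ε + (1/(√ε ρ_ε))∇·σ_ε + (1/(ε ρ_ε))∇φ_ε + (2/(3ρ_ε))∇k_ε = (1 − ρ₀/ρ_ε)(∂_t u + u·∇u); (3) ∂_t σ_ε + u_ε·∇σ_ε + (1/(2√ε α₁ ρ_ε))(∇u_ε + (∇u_ε)ᵀ) + (1/(ε α₁))·σ_ε/(ν_T + ν) = −(∂_t + u·∇)[(√ε/(2ρ₀))(l√k + ν)(∇u + (∇u)ᵀ)] − (1/(√ε α₁))(1 − ρ₀/ρ_ε)·(1/(2ρ₀))(∇u + (∇u)ᵀ); (4) ∂_t k_ε + u_ε·∇k_ε + (2/(3α₂ρ_ε))∇·u_ε + (ξ/(√ε α₂α₃ρ_ε))∇·y_ε − (2β/(ε α₂))·(ν_T/(ν_T+ν)²)·(σ_ε : σ_ε) + (βC_D/(α₂ l))·k_ε^{3/2} = (1/ρ₀)(1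 − ρ₀/ρ_ε)·(ξ²/(α₂ρ₀))∇·((ν_T + ν)∇k); (5) ∂_t y_ε + u_ε·∇y_ε + (ξ/(√ε ρ_ε))∇k_ε + (1/ε)·y_ε/(α₃(ν_T + ν)) = −√ε(∂_t + u·∇)[(ξα₃/ρ₀)(ν_T + ν)∇k] − (ξ/√ε)(1 − ρ₀/ρ_ε)·(∇k)/ρ₀, where α₁ > 0 is arbitrary and in (4) the constants satisfy β = ξ². -/
noncomputable section

/-- Time derivative of a scalar field `f(x,t)`. -/
def Dt (f : (Fin 3 → ℝ) → ℝ → ℝ) (x : Fin 3 → ℝ) (t : ℝ) : ℝ :=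
  deriv (fun s => f x s) t

/-- Spatial partial derivative `∂_{x_j}` of a scalar field `f(x,t)`. -/
def Dx (j : Fin 3) (f : (Fin 3 → ℝ) → ℝ → ℝ) (x : Fin 3 → ℝ) (t : ℝ) : ℝ :=
  fderiv ℝ (fun y => f y t) x (Pi.single j 1)

/-- Double contraction `X : Y = Σ_{i,j} X_{ij} Y_{ji}` of two `3×3` arrays. -/
def ddot (X Y : Fin 3 → Fin 3 → ℝ) : ℝ := ∑ i, ∑ j, X i j * Y j i


private lemma Dt_cmul {f g : (Fin 3 → ℝ) → ℝ → ℝ} {x : Fin 3 → ℝ} (t : ℝ) (c : ℝ)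
    (hf : ∀ s, f x s = c * g x s) : Dt f x t = c * Dt g x t := by
  unfold Dt
  rw [show (fun s => f x s) = fun s => c * g x s from funext hf, deriv_const_mul_field]

private lemma Dx_cmul {f g : (Fin 3 → ℝ) → ℝ → ℝ} {x : Fin 3 → ℝ} {t : ℝ} (m : Fin 3) (c : ℝ)
    (hf : ∀ y, f y t = c * g y t) (hg : DifferentiableAt ℝ (fun y => g y t) x) :
    Dx m f x t = c * Dx m g x t := by
  unfold Dx
  rw [show (fun y => f y t) = fun y => c * g y t from funext hf, fderiv_const_mul hg]
  simp

private lemma Dx_eqF {f : (Fin 3 → ℝ) → ℝ → ℝ} {F : (Fin 3 → ℝ) → ℝ} {x : Fin 3 → ℝ} {t : ℝ}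
    (m : Fin 3) (c : ℝ) (hf : ∀ y, f y t = c * F y) (hF : DifferentiableAt ℝ F x) :
    Dx m f x t = c * fderiv ℝ F x (Pi.single m 1) := by
  unfold Dx
  rw [show (fun y => f y t) = fun y => c * F y from funext hf, fderiv_const_mul hF]
  simp

private lemma cancel_aux {a b X : ℝ} (ha : a ≠ 0) : 1/(a*b)*(a*X) = 1/b * X := by
  rcases eq_or_ne b 0 with rfl|hb
  · simp
  · field_simp

/- STATEMENT 10: The approximate solution `(φ_ε, u_ε, σ_ε, k_ε, y_ε)` built from a
smooth solution `(u, π, k)` of the incompressible limit system satisfies the rescaled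
compressible hyperbolic turbulence model up to the explicit residuals `f₁, …, f₅`
(the right-hand sides of the five identities below).  Here `β = ξ²`, `ν_T = l√k`,
`p` is a smooth strictly increasing pressure law with inverse `ρfun`,
`q(p) = [ρ(p)·p′(ρ(p))]⁻¹`, `q_ε = q(p₀ + ε²π)`, `ρ_ε = ρ(p₀ + ε²π)`. -/
set_option maxHeartbeats 1000000 in
theorem approximate_solution_residuals
    (ρ₀ ν l CD ξ α₁ α₂ α₃ β : ℝ)
    (hρ₀ : 0 < ρ₀) (hν : 0 < ν) (hl : 0 < l) (hCD : 0 < CD) (hξ : 0 < ξ)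
    (hα₁ : 0 < α₁) (hα₂ : 0 < α₂) (hα₃ : 0 < α₃) (hβ : 0 < β) (hβξ : β = ξ ^ 2)
    -- the pressure law and its inverse
    (p : ℝ → ℝ) (hp : ContDiff ℝ (⊤ : ℕ∞) p) (hpmono : StrictMono p)
    (ρfun : ℝ → ℝ) (hρfun₁ : Function.LeftInverse ρfun p)
    (hρfun₂ : Function.RightInverse ρfun p)
    (p₀ : ℝ) (hp₀ : p₀ = p ρ₀) (hp₀pos : 0 < p₀)
    (qfun : ℝ → ℝ) (hqfun : qfun = fun z => (ρfun z * deriv p (ρfun z))⁻¹)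
    -- the smooth solution of the incompressible limit system on ℝ³ × [0,T]
    (T : ℝ) (hT : 0 < T)
    (u : (Fin 3 → ℝ) → ℝ → (Fin 3 → ℝ)) (π k : (Fin 3 → ℝ) → ℝ → ℝ)
    (hreg : ContDiffOn ℝ 2 (fun pt : (Fin 3 → ℝ) × ℝ =>
        (u pt.1 pt.2, π pt.1 pt.2, k pt.1 pt.2))
      (Set.univ ×ˢ Set.Icc 0 T))
    (hkpos : ∀ x t, t ∈ Set.Icc 0 T → 0 < k x t)
    (νT : (Fin 3 → ℝ) → ℝ → ℝ) (hνT : νT = fun x t => l * Real.sqrt (k x t))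
    (σ : (Fin 3 → ℝ) → ℝ → Fin 3 → Fin 3 → ℝ)
    (hσ : ∀ x t i j, ρ₀ * σ x t i j = -(1 / 2) * (νT x t + ν) *
      (Dx j (fun y s => u y s i) x t + Dx i (fun y s => u y s j) x t))
    (yf : (Fin 3 → ℝ) → ℝ → (Fin 3 → ℝ))
    (hyf : ∀ x t m, ρ₀ * yf x t m = -(ξ * α₃) * (νT x t + ν) * Dx m k x t)
    (hdiv : ∀ x t, t ∈ Set.Icc 0 T → ∑ m, Dx m (fun y s => u y s m) x t = 0)
    (hmom : ∀ x t, t ∈ Set.Icc 0 T → ∀ i,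
      ρ₀ * (Dt (fun y s => u y s i) x t
          + ∑ m, u x t m * Dx m (fun y s => u y s i) x t)
        + ∑ j, Dx j (fun y s => σ y s i j) x t + Dx i π x t
        + 2 / 3 * Dx i k x t = 0)
    (hk : ∀ x t, t ∈ Set.Icc 0 T →
      Dt k x t + ∑ m, u x t m * Dx m k x t
        + ξ / (α₂ * α₃ * ρ₀) * ∑ m, Dx m (fun y s => yf y s m) x t
      = 2 * β / α₂ * (νT x t / (νT x t + ν) ^ 2) * ddot (σ x t) (σ x t)
        - β * CD / (α₂ * l) * k x t ^ ((3 : ℝ) / 2))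
    -- the Mach-number parameter and the approximate solution
    (ε : ℝ) (hε : ε ∈ Set.Ioc (0 : ℝ) 1)
    (φe : (Fin 3 → ℝ) → ℝ → ℝ) (hφe : φe = fun x t => ε * π x t)
    (ue : (Fin 3 → ℝ) → ℝ → (Fin 3 → ℝ)) (hue : ue = u)
    (σe : (Fin 3 → ℝ) → ℝ → Fin 3 → Fin 3 → ℝ)
    (hσe : σe = fun x t i j => -(Real.sqrt ε / (2 * ρ₀)) * (l * Real.sqrt (k x t) + ν) *
      (Dx j (fun y s => u y s i) x t + Dx i (fun y s => u y s j) x t))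
    (ke : (Fin 3 → ℝ) → ℝ → ℝ) (hke : ke = k)
    (ye : (Fin 3 → ℝ) → ℝ → (Fin 3 → ℝ))
    (hye : ye = fun x t m => -(Real.sqrt ε * ξ * α₃ / ρ₀) *
      (l * Real.sqrt (k x t) + ν) * Dx m k x t)
    (qe ρe : (Fin 3 → ℝ) → ℝ → ℝ)
    (hqe : qe = fun x t => qfun (p₀ + ε ^ 2 * π x t))
    (hρe : ρe = fun x t => ρfun (p₀ + ε ^ 2 * π x t)) :
    ∀ x t, t ∈ Set.Icc 0 T →
      -- (1)
      (Dt φe x t + ∑ m, ue x t m * Dx m φe x t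
          + 1 / (ε * qe x t) * ∑ m, Dx m (fun y s => ue y s m) x t
        = ε * (Dt π x t + ∑ m, u x t m * Dx m π x t)) ∧
      -- (2)
      (∀ i, Dt (fun y s => ue y s i) x t
          + ∑ m, ue x t m * Dx m (fun y s => ue y s i) x t
          + 1 / (Real.sqrt ε * ρe x t) * ∑ j, Dx j (fun y s => σe y s i j) x t
          + 1 / (ε * ρe x t) * Dx i φe x t
          + 2 / (3 * ρe x t) * Dx i ke x t
        = (1 - ρ₀ / ρe x t) * (Dt (fun y s => u y s i) x t
            + ∑ m, u x t m * Dx m (fun y s => u y s i) x t)) ∧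
      -- (3)
      (∀ i j, Dt (fun y s => σe y s i j) x t
          + ∑ m, ue x t m * Dx m (fun y s => σe y s i j) x t
          + 1 / (2 * Real.sqrt ε * α₁ * ρe x t) *
              (Dx j (fun y s => ue y s i) x t + Dx i (fun y s => ue y s j) x t)
          + 1 / (ε * α₁) * σe x t i j / (νT x t + ν)
        = -(Dt (fun y s => Real.sqrt ε / (2 * ρ₀) * (l * Real.sqrt (k y s) + ν) *
              (Dx j (fun y' s' => u y' s' i) y s
                + Dx i (fun y' s' => u y' s' j) y s)) x t
            + ∑ m, u x t m * Dx m (fun y s =>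
                Real.sqrt ε / (2 * ρ₀) * (l * Real.sqrt (k y s) + ν) *
                  (Dx j (fun y' s' => u y' s' i) y s
                    + Dx i (fun y' s' => u y' s' j) y s)) x t)
          - 1 / (Real.sqrt ε * α₁) * (1 - ρ₀ / ρe x t) * (1 / (2 * ρ₀)) *
              (Dx j (fun y s => u y s i) x t + Dx i (fun y s => u y s j) x t)) ∧
      -- (4)
      (Dt ke x t + ∑ m, ue x t m * Dx m ke x t
          + 2 / (3 * α₂ * ρe x t) * ∑ m, Dx m (fun y s => ue y s m) x t
          + ξ / (Real.sqrt ε * α₂ * α₃ * ρe x t) * ∑ m, Dx m (fun y s => ye y s m) x t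
          - 2 * β / (ε * α₂) * (νT x t / (νT x t + ν) ^ 2) * ddot (σe x t) (σe x t)
          + β * CD / (α₂ * l) * ke x t ^ ((3 : ℝ) / 2)
        = 1 / ρ₀ * (1 - ρ₀ / ρe x t) *
            (ξ ^ 2 / (α₂ * ρ₀) *
              ∑ m, Dx m (fun y s => (νT y s + ν) * Dx m k y s) x t)) ∧
      -- (5)
      (∀ j, Dt (fun y s => ye y s j) x t
          + ∑ m, ue x t m * Dx m (fun y s => ye y s j) x t
          + ξ / (Real.sqrt ε * ρe x t) * Dx j ke x t
          + 1 / ε * ye x t j / (α₃ * (νT x t + ν))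
        = -Real.sqrt ε * (Dt (fun y s =>
              ξ * α₃ / ρ₀ * (νT y s + ν) * Dx j k y s) x t
            + ∑ m, u x t m * Dx m (fun y s =>
                ξ * α₃ / ρ₀ * (νT y s + ν) * Dx j k y s) x t)
          - ξ / Real.sqrt ε * (1 - ρ₀ / ρe x t) * Dx j k x t / ρ₀) := by
  subst hνT hβξ hφe hue hσe hke hye
  rename' ue => u, ke => k
  obtain ⟨hε0, hε1⟩ := hε
  have hc : (0:ℝ) < Real.sqrt ε := Real.sqrt_pos.mpr hε0
  have hc2 : Real.sqrt ε * Real.sqrt ε = ε := Real.mul_self_sqrt hε0.le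
  intro x t ht
  -- regularity
  have hbase : ContDiff ℝ 2 (fun y : Fin 3 → ℝ => (u y t, π y t, k y t)) := by
    rw [← contDiffOn_univ]
    exact hreg.comp ((contDiff_id.prodMk contDiff_const).contDiffOn)
      (fun y _ => ⟨Set.mem_univ _, ht⟩)
  have hkC : ContDiff ℝ 2 (fun y => k y t) := (contDiff_snd.comp contDiff_snd).comp hbase
  have hπC : ContDiff ℝ 2 (fun y => π y t) := (contDiff_fst.comp contDiff_snd).comp hbase
  have huC : ∀ i, ContDiff ℝ 2 (fun y => u y t i) := fun i =>
    contDiff_pi.mp (contDiff_fst.comp hbase) i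
  have hDkC : ∀ m, DifferentiableAt ℝ (fun y => Dx m k y t) x := by
    intro m
    have h := (hkC.fderiv_right (m := 1) (by norm_num)).clm_apply
      (contDiff_const (c := (Pi.single m 1 : Fin 3 → ℝ)))
    exact h.differentiable one_ne_zero x
  have hDuC : ∀ i m, DifferentiableAt ℝ (fun y => Dx m (fun a b => u a b i) y t) x := by
    intro i m
    have h := ((huC i).fderiv_right (m := 1) (by norm_num)).clm_apply
      (contDiff_const (c := (Pi.single m 1 : Fin 3 → ℝ)))
    exact h.differentiable one_ne_zero x
  have hsq : DifferentiableAt ℝ (fun y => Real.sqrt (k y t)) x :=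
    (hkC.differentiable (by norm_num) x).sqrt (hkpos x t ht).ne'
  have hAdiff : DifferentiableAt ℝ (fun y => l * Real.sqrt (k y t) + ν) x :=
    (hsq.const_mul l).add_const ν
  have hGdiff : ∀ m, DifferentiableAt ℝ
      (fun y => (l * Real.sqrt (k y t) + ν) * Dx m k y t) x :=
    fun m => hAdiff.mul (hDkC m)
  have hEdiff : ∀ i j, DifferentiableAt ℝ (fun y => (l * Real.sqrt (k y t) + ν) *
      (Dx j (fun a b => u a b i) y t + Dx i (fun a b => u a b j) y t)) x :=
    fun i j => hAdiff.mul ((hDuC i j).add (hDuC j i))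
  have hA : (0:ℝ) < l * Real.sqrt (k x t) + ν := by
    have := Real.sqrt_nonneg (k x t)
    nlinarith
  have hπd : DifferentiableAt ℝ (fun y => π y t) x := hπC.differentiable (by norm_num) x
  have hσ' : ∀ y s i j, σ y s i j = -(1/(2*ρ₀)) * ((l * Real.sqrt (k y s) + ν) *
      (Dx j (fun a b => u a b i) y s + Dx i (fun a b => u a b j) y s)) := by
    intro y s i j
    apply mul_left_cancel₀ hρ₀.ne'
    rw [hσ y s i j]
    field_simp
  have hyf' : ∀ y s m, yf y s m = -(ξ * α₃ / ρ₀) * ((l * Real.sqrt (k y s) + ν) *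
      Dx m k y s) := by
    intro y s m
    apply mul_left_cancel₀ hρ₀.ne'
    rw [hyf y s m]
    field_simp
  refine ⟨?_, ?_, ?_, ?_, ?_⟩
  · -- (1)
    have h1t : Dt (fun x t => ε * π x t) x t = ε * Dt π x t :=
      Dt_cmul t ε fun s => rfl
    have h1x : ∀ m, Dx m (fun x t => ε * π x t) x t = ε * Dx m π x t :=
      fun m => Dx_cmul m ε (fun y => rfl) hπd
    have hsum : ∑ m, u x t m * Dx m (fun x t => ε * π x t) x t
        = ε * ∑ m, u x t m * Dx m π x t := by
      rw [Finset.mul_sum]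
      exact Finset.sum_congr rfl fun m _ => by rw [h1x m]; ring
    rw [h1t, hsum, hdiv x t ht]
    ring
  · -- (2)
    intro i
    beta_reduce
    have h1x : Dx i (fun x t => ε * π x t) x t = ε * Dx i π x t :=
      Dx_cmul i ε (fun y => rfl) hπd
    have hσeD : ∀ j : Fin 3, Dx j (fun y s =>
          -(Real.sqrt ε / (2 * ρ₀)) * (l * Real.sqrt (k y s) + ν) *
            (Dx j (fun y s => u y s i) y s + Dx i (fun y s => u y s j) y s)) x t
        = Real.sqrt ε * Dx j (fun y s => σ y s i j) x t := by
      intro j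
      rw [Dx_eqF j (-(Real.sqrt ε / (2*ρ₀))) (fun y => by ring) (hEdiff i j),
          Dx_eqF j (-(1/(2*ρ₀))) (fun y => hσ' y t i j) (hEdiff i j)]
      ring
    rw [Finset.sum_congr rfl (fun j _ => hσeD j), ← Finset.mul_sum, h1x,
      cancel_aux hc.ne', cancel_aux hε0.ne']
    linear_combination (1 / ρe x t) * hmom x t ht i
  · -- (3)
    intro i j
    beta_reduce
    have hhd : DifferentiableAt ℝ (fun y => Real.sqrt ε / (2 * ρ₀) *
        (l * Real.sqrt (k y t) + ν) *
        (Dx j (fun a b => u a b i) y t + Dx i (fun a b => u a b j) y t)) x :=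
      ((hAdiff.const_mul (Real.sqrt ε / (2 * ρ₀))).mul ((hDuC i j).add (hDuC j i)))
    have hDt3 : Dt (fun y s => -(Real.sqrt ε / (2 * ρ₀)) * (l * Real.sqrt (k y s) + ν) *
          (Dx j (fun a b => u a b i) y s + Dx i (fun a b => u a b j) y s)) x t
        = (-1) * Dt (fun y s => Real.sqrt ε / (2 * ρ₀) * (l * Real.sqrt (k y s) + ν) *
          (Dx j (fun a b => u a b i) y s + Dx i (fun a b => u a b j) y s)) x t :=
      Dt_cmul t (-1) (fun s => by ring)
    have hDx3 : ∀ m : Fin 3, Dx m (fun y s => -(Real.sqrt ε / (2 * ρ₀)) *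
          (l * Real.sqrt (k y s) + ν) *
          (Dx j (fun a b => u a b i) y s + Dx i (fun a b => u a b j) y s)) x t
        = (-1) * Dx m (fun y s => Real.sqrt ε / (2 * ρ₀) * (l * Real.sqrt (k y s) + ν) *
          (Dx j (fun a b => u a b i) y s + Dx i (fun a b => u a b j) y s)) x t :=
      fun m => Dx_cmul m (-1) (fun y => by ring) hhd
    have hsum3 : ∑ m, u x t m * Dx m (fun y s => -(Real.sqrt ε / (2 * ρ₀)) *
          (l * Real.sqrt (k y s) + ν) *
          (Dx j (fun a b => u a b i) y s + Dx i (fun a b => u a b j) y s)) x t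
        = -∑ m, u x t m * Dx m (fun y s => Real.sqrt ε / (2 * ρ₀) *
          (l * Real.sqrt (k y s) + ν) *
          (Dx j (fun a b => u a b i) y s + Dx i (fun a b => u a b j) y s)) x t := by
      rw [← Finset.sum_neg_distrib]
      exact Finset.sum_congr rfl fun m _ => by rw [hDx3 m]; ring
    rw [hDt3, hsum3,
      show ε = Real.sqrt ε * Real.sqrt ε from hc2.symm, Real.sqrt_mul_self hc.le]
    generalize hgc : Real.sqrt ε = c
    have hcpos : (0:ℝ) < c := hgc ▸ hc
    rcases eq_or_ne (ρe x t) 0 with h0 | h0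
    · rw [h0]
      field_simp [hA.ne', hcpos.ne']
      ring
    · field_simp [hA.ne', hcpos.ne', h0]
      ring
  · -- (4)
    beta_reduce
    have hk' := hk x t ht
    beta_reduce at hk'
    have hyeD : ∀ m : Fin 3, Dx m (fun y s => -(Real.sqrt ε * ξ * α₃ / ρ₀) *
          (l * Real.sqrt (k y s) + ν) * Dx m k y s) x t
        = Real.sqrt ε * Dx m (fun y s => yf y s m) x t := by
      intro m
      rw [Dx_eqF m (-(Real.sqrt ε * ξ * α₃ / ρ₀)) (fun y => by ring) (hGdiff m),
          Dx_eqF m (-(ξ * α₃ / ρ₀)) (fun y => hyf' y t m) (hGdiff m)]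
      ring
    have hGD : ∀ m : Fin 3, Dx m (fun y s => (l * Real.sqrt (k y s) + ν) * Dx m k y s) x t
        = -(ρ₀ / (ξ * α₃)) * Dx m (fun y s => yf y s m) x t := by
      intro m
      rw [Dx_eqF m 1 (fun y => (one_mul _).symm) (hGdiff m),
          Dx_eqF m (-(ξ * α₃ / ρ₀)) (fun y => hyf' y t m) (hGdiff m)]
      field_simp
    have hdd : ddot (fun i j => -(Real.sqrt ε / (2 * ρ₀)) * (l * Real.sqrt (k x t) + ν) *
          (Dx j (fun y s => u y s i) x t + Dx i (fun y s => u y s j) x t))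
        (fun i j => -(Real.sqrt ε / (2 * ρ₀)) * (l * Real.sqrt (k x t) + ν) *
          (Dx j (fun y s => u y s i) x t + Dx i (fun y s => u y s j) x t))
        = Real.sqrt ε * Real.sqrt ε * ddot (σ x t) (σ x t) := by
      unfold ddot
      rw [Finset.mul_sum]
      refine Finset.sum_congr rfl fun i _ => ?_
      rw [Finset.mul_sum]
      refine Finset.sum_congr rfl fun j _ => ?_
      rw [hσ' x t i j, hσ' x t j i]
      ring
    have hP : Dt k x t = 2 * ξ ^ 2 / α₂ *
          (l * Real.sqrt (k x t) / (l * Real.sqrt (k x t) + ν) ^ 2) * ddot (σ x t) (σ x t)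
        - ξ ^ 2 * CD / (α₂ * l) * k x t ^ ((3:ℝ)/2)
        - (∑ m, u x t m * Dx m k x t)
        - ξ / (α₂ * α₃ * ρ₀) * ∑ m, Dx m (fun y s => yf y s m) x t := by
      linarith [hk']
    rw [show ε = Real.sqrt ε * Real.sqrt ε from hc2.symm, Real.sqrt_mul_self hc.le,
      hdd, hdiv x t ht,
      Finset.sum_congr rfl (fun m (_ : m ∈ Finset.univ) => hyeD m), ← Finset.mul_sum,
      Finset.sum_congr rfl (fun m (_ : m ∈ Finset.univ) => hGD m), ← Finset.mul_sum, hP]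
    generalize hgc : Real.sqrt ε = c
    have hcpos : (0:ℝ) < c := hgc ▸ hc
    rcases eq_or_ne (ρe x t) 0 with h0 | h0
    · rw [h0]
      field_simp [hA.ne', hξ.ne', hα₂.ne', hα₃.ne', hl.ne', hρ₀.ne', hcpos.ne']
      ring
    · field_simp [hA.ne', hξ.ne', hα₂.ne', hα₃.ne', hl.ne', hρ₀.ne', hcpos.ne', h0]
      ring
  · -- (5)
    intro j
    beta_reduce
    have hgd : DifferentiableAt ℝ (fun y => ξ * α₃ / ρ₀ *
        (l * Real.sqrt (k y t) + ν) * Dx j k y t) x :=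
      (hAdiff.const_mul (ξ * α₃ / ρ₀)).mul (hDkC j)
    have hDt5 : Dt (fun y s => -(Real.sqrt ε * ξ * α₃ / ρ₀) * (l * Real.sqrt (k y s) + ν) *
          Dx j k y s) x t
        = -Real.sqrt ε * Dt (fun y s => ξ * α₃ / ρ₀ * (l * Real.sqrt (k y s) + ν) *
          Dx j k y s) x t :=
      Dt_cmul t (-Real.sqrt ε) (fun s => by ring)
    have hDx5 : ∀ m : Fin 3, Dx m (fun y s => -(Real.sqrt ε * ξ * α₃ / ρ₀) *
          (l * Real.sqrt (k y s) + ν) * Dx j k y s) x t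
        = -Real.sqrt ε * Dx m (fun y s => ξ * α₃ / ρ₀ * (l * Real.sqrt (k y s) + ν) *
          Dx j k y s) x t :=
      fun m => Dx_cmul m (-Real.sqrt ε) (fun y => by ring) hgd
    have hsum5 : ∑ m, u x t m * Dx m (fun y s => -(Real.sqrt ε * ξ * α₃ / ρ₀) *
          (l * Real.sqrt (k y s) + ν) * Dx j k y s) x t
        = -Real.sqrt ε * ∑ m, u x t m * Dx m (fun y s => ξ * α₃ / ρ₀ *
          (l * Real.sqrt (k y s) + ν) * Dx j k y s) x t := by
      rw [Finset.mul_sum]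
      exact Finset.sum_congr rfl fun m _ => by rw [hDx5 m]; ring
    rw [hDt5, hsum5,
      show ε = Real.sqrt ε * Real.sqrt ε from hc2.symm, Real.sqrt_mul_self hc.le]
    generalize hgc : Real.sqrt ε = c
    have hcpos : (0:ℝ) < c := hgc ▸ hc
    rcases eq_or_ne (ρe x t) 0 with h0 | h0
    · rw [h0]
      field_simp [hA.ne', hα₃.ne', hρ₀.ne', hcpos.ne']
      ring
    · field_simp [hA.ne', hα₃.ne', hρ₀.ne', hcpos.ne', h0]
      ring
end
end

section
/- Let ρ₀ = 1, let ν, l, C_D, ξ, α₃ > 0, set α₂ = β = ξ², and let (u, π, k, σ, y) be C² fields on ℝ³ × (0,T) with k > 0 satisfying: ∇·u = 0; ∂_t u + u·∇u + ∇·σ + ∇π + (2/3)∇k = 0; σ = −(1/2)(ν_T + ν)(∇u + (∇u)ᵀ) with ν_T := l√k; ∂_t k + u·∇k + (ξ/(α₂α₃))∇·y = (2β/α₂)·(ν_T/(ν_T+ν)²)·(σ : σ) − (βC_D/(α₂ l))k^{3/2}; and y = −ξα₃(ν_T + ν)∇k. Then, with S := (∇u + (∇u)ᵀ)/2, the pair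 (u, π + (2/3)k) satisfies the incompressible Reynolds-averaged momentum equation ∂_t u + u·∇u + ∇(π + (2/3)k) = ∇·((ν + ν_T)S), and k satisfies Prandtl's one-equation model ∂_t k + u·∇k = 2ν_T·(S : S) − C_D k^{3/2}/l + ∇·((ν + ν_T)∇k). -/
noncomputable section

/- STATEMENT 11: With `ρ₀ = 1`, `α₂ = β = ξ²`, the formal low Mach number limit system
(the five relations on `(u, π, k, σ, y)`) implies that `(u, π + (2/3)k)` satisfies the
incompressible Reynolds-averaged momentum equation
`∂_t u + u·∇u + ∇(π + (2/3)k) = ∇·((ν + ν_T)S)` and that `k` satisfies Prandtl's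
one-equation model
`∂_t k + u·∇k = 2ν_T(S : S) − C_D k^{3/2}/l + ∇·((ν + ν_T)∇k)`. -/
theorem limit_system_is_rans_prandtl
    (ρ₀ ν l CD ξ α₂ α₃ β : ℝ)
    (hρ₀ : ρ₀ = 1) (hν : 0 < ν) (hl : 0 < l) (hCD : 0 < CD) (hξ : 0 < ξ)
    (hα₃ : 0 < α₃) (hα₂ : α₂ = ξ ^ 2) (hβ : β = ξ ^ 2)
    (T : ℝ) (hT : 0 < T)
    (u : (Fin 3 → ℝ) → ℝ → (Fin 3 → ℝ)) (π k : (Fin 3 → ℝ) → ℝ → ℝ)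
    (σ : (Fin 3 → ℝ) → ℝ → Fin 3 → Fin 3 → ℝ)
    (yf : (Fin 3 → ℝ) → ℝ → (Fin 3 → ℝ))
    (hreg : ContDiffOn ℝ 2 (fun p : (Fin 3 → ℝ) × ℝ =>
        (u p.1 p.2, π p.1 p.2, k p.1 p.2, σ p.1 p.2, yf p.1 p.2))
      (Set.univ ×ˢ Set.Ioo 0 T))
    (hkpos : ∀ x t, t ∈ Set.Ioo 0 T → 0 < k x t)
    (νT : (Fin 3 → ℝ) → ℝ → ℝ) (hνT : νT = fun x t => l * Real.sqrt (k x t))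
    (S : (Fin 3 → ℝ) → ℝ → Fin 3 → Fin 3 → ℝ)
    (hS : S = fun x t i j =>
      (Dx j (fun y s => u y s i) x t + Dx i (fun y s => u y s j) x t) / 2)
    -- the five relations of the formal low Mach number limit
    (hdiv : ∀ x t, t ∈ Set.Ioo 0 T → ∑ m, Dx m (fun y s => u y s m) x t = 0)
    (hmom : ∀ x t, t ∈ Set.Ioo 0 T → ∀ i,
      Dt (fun y s => u y s i) x t + ∑ m, u x t m * Dx m (fun y s => u y s i) x t
        + ∑ j, Dx j (fun y s => σ y s i j) x t + Dx i π x t + 2 / 3 * Dx i k x t = 0)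
    (hσ : ∀ x t i j, σ x t i j = -(1 / 2) * (νT x t + ν) *
      (Dx j (fun y s => u y s i) x t + Dx i (fun y s => u y s j) x t))
    (hk : ∀ x t, t ∈ Set.Ioo 0 T →
      Dt k x t + ∑ m, u x t m * Dx m k x t
        + ξ / (α₂ * α₃) * ∑ m, Dx m (fun y s => yf y s m) x t
      = 2 * β / α₂ * (νT x t / (νT x t + ν) ^ 2) * ddot (σ x t) (σ x t)
        - β * CD / (α₂ * l) * k x t ^ ((3 : ℝ) / 2))
    (hy : ∀ x t m, yf x t m = -(ξ * α₃) * (νT x t + ν) * Dx m k x t) :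
    ∀ x t, t ∈ Set.Ioo 0 T →
      (∀ i, Dt (fun y s => u y s i) x t
          + ∑ m, u x t m * Dx m (fun y s => u y s i) x t
          + Dx i (fun y s => π y s + 2 / 3 * k y s) x t
        = ∑ j, Dx j (fun y s => (ν + νT y s) * S y s i j) x t) ∧
      (Dt k x t + ∑ m, u x t m * Dx m k x t
        = 2 * νT x t * ddot (S x t) (S x t) - CD * k x t ^ ((3 : ℝ) / 2) / l
          + ∑ m, Dx m (fun y s => (ν + νT y s) * Dx m k y s) x t) := by

  intro x t ht
  -- regularity of the time-slice
  have hFt : ContDiff ℝ 2 (fun z : Fin 3 → ℝ => (u z t, π z t, k z t, σ z t, yf z t)) := by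
    rw [← contDiffOn_univ]
    exact hreg.comp (contDiff_id.prodMk contDiff_const).contDiffOn
      (fun z _ => ⟨trivial, ht⟩)
  have hπ2 : ContDiff ℝ 2 (fun z => π z t) := hFt.snd.fst
  have hk2 : ContDiff ℝ 2 (fun z => k z t) := hFt.snd.snd.fst
  have hπd : DifferentiableAt ℝ (fun z => π z t) x :=
    (hπ2.differentiable two_ne_zero).differentiableAt
  have hkd : DifferentiableAt ℝ (fun z => k z t) x :=
    (hk2.differentiable two_ne_zero).differentiableAt
  constructor
  · intro i
    have hsplit : Dx i (fun y s => π y s + 2 / 3 * k y s) x t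
        = Dx i π x t + 2 / 3 * Dx i k x t := by
      simp only [Dx]
      rw [fderiv_fun_add hπd (hkd.const_mul (2/3 : ℝ)), fderiv_const_mul hkd]
      simp
    have hRHS : ∀ j, Dx j (fun y s => (ν + νT y s) * S y s i j) x t
        = -Dx j (fun y s => σ y s i j) x t := by
      intro j
      have hfun : (fun y => (ν + νT y t) * S y t i j) = fun y => -(σ y t i j) := by
        funext y
        simp only [hσ, hνT, hS]
        ring
      simp only [Dx]
      rw [hfun, fderiv_fun_neg]
      simp
    rw [hsplit]
    have hsum : ∑ j, Dx j (fun y s => (ν + νT y s) * S y s i j) x t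
        = -∑ j, Dx j (fun y s => σ y s i j) x t := by
      rw [← Finset.sum_neg_distrib]
      exact Finset.sum_congr rfl (fun j _ => hRHS j)
    rw [hsum]
    have hm := hmom x t ht i
    linarith
  · -- Prandtl equation
    have hνTν : νT x t + ν ≠ 0 := by
      rw [hνT]
      positivity
    have hDk : ∀ m : Fin 3, DifferentiableAt ℝ
        (fun y => fderiv ℝ (fun z => k z t) y (Pi.single m 1)) x := by
      intro m
      have h1 : ContDiff ℝ 1 (fderiv ℝ (fun z => k z t)) :=
        hk2.fderiv_right (by norm_num)
      exact ((h1.clm_apply contDiff_const).differentiable one_ne_zero).differentiableAt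
    have hsqd : DifferentiableAt ℝ (fun y => Real.sqrt (k y t)) x :=
      ((hk2.contDiffAt.sqrt (ne_of_gt (hkpos x t ht))).differentiableAt two_ne_zero)
    have hgd : ∀ m : Fin 3, DifferentiableAt ℝ
        (fun y => (ν + νT y t) * Dx m k y t) x := by
      intro m
      simp only [hνT, Dx]
      exact ((differentiableAt_const ν).add (hsqd.const_mul l)).mul (hDk m)
    have hsum : ∀ m : Fin 3, Dx m (fun y s => yf y s m) x t
        = -(ξ * α₃) * Dx m (fun y s => (ν + νT y s) * Dx m k y s) x t := by
      intro m
      have hfun : (fun y => yf y t m)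
          = fun y => (-(ξ * α₃)) * ((ν + νT y t) * Dx m k y t) := by
        funext y
        rw [hy]
        ring
      simp only [Dx]
      rw [hfun, fderiv_const_mul (hgd m)]
      simp [Dx]
    have e1 : ∑ m, Dx m (fun y s => yf y s m) x t
        = -(ξ * α₃) * ∑ m, Dx m (fun y s => (ν + νT y s) * Dx m k y s) x t := by
      rw [Finset.mul_sum]
      exact Finset.sum_congr rfl (fun m _ => hsum m)
    have e2 : ddot (σ x t) (σ x t) = (νT x t + ν) ^ 2 * ddot (S x t) (S x t) := by
      simp only [ddot, hσ, hS, Finset.mul_sum]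
      refine Finset.sum_congr rfl (fun i _ => Finset.sum_congr rfl (fun j _ => ?_))
      ring
    have hk' := hk x t ht
    rw [e1, e2, hα₂, hβ] at hk'
    have hξ0 : ξ ≠ 0 := ne_of_gt hξ
    have hα₃0 : α₃ ≠ 0 := ne_of_gt hα₃
    have hl0 : l ≠ 0 := ne_of_gt hl
    have c1 : ξ / (ξ ^ 2 * α₃) * (-(ξ * α₃) *
        ∑ m, Dx m (fun y s => (ν + νT y s) * Dx m k y s) x t)
        = -∑ m, Dx m (fun y s => (ν + νT y s) * Dx m k y s) x t := by
      field_simp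
    have c2 : 2 * ξ ^ 2 / ξ ^ 2 * (νT x t / (νT x t + ν) ^ 2) *
        ((νT x t + ν) ^ 2 * ddot (S x t) (S x t))
        = 2 * νT x t * ddot (S x t) (S x t) := by
      field_simp
    have c3 : ξ ^ 2 * CD / (ξ ^ 2 * l) * k x t ^ ((3:ℝ)/2)
        = CD * k x t ^ ((3:ℝ)/2) / l := by
      field_simp
    rw [c1, c2, c3] at hk'
    linarith
end
end

section
/- Let C > 0, m > 0, T > 0, and let Φ : [0,T] → ℝ be differentiable with Φ(t) ≥ 0 for all t ∈ [0,T], Φ′(t) ≤ C·Φ(t) + C·Φ(t)^{1+m} for all t ∈ [0,T], and Φ(0) ≤ exp(−2CT). Then Φ(t) ≤ Φ(0)·exp(2Ct) ≤ 1 for all t ∈ [0,T]. -/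
/- STATEMENT 12: Nonlinear Gronwall-type inequality.  If `Φ ≥ 0` is differentiable on
`[0,T]` with `Φ′ ≤ CΦ + CΦ^{1+m}` and `Φ(0) ≤ exp(−2CT)`, then
`Φ(t) ≤ Φ(0)·exp(2Ct) ≤ 1` on `[0,T]`. -/
theorem nonlinear_gronwall
    (C m T : ℝ) (hC : 0 < C) (hm : 0 < m) (hT : 0 < T)
    (Φ Φ' : ℝ → ℝ)
    (hdiff : ∀ t ∈ Set.Icc 0 T, HasDerivWithinAt Φ (Φ' t) (Set.Icc 0 T) t)
    (hpos : ∀ t ∈ Set.Icc 0 T, 0 ≤ Φ t)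
    (hineq : ∀ t ∈ Set.Icc 0 T, Φ' t ≤ C * Φ t + C * Φ t ^ (1 + m))
    (h0 : Φ 0 ≤ Real.exp (-(2 * C * T))) :
    ∀ t ∈ Set.Icc 0 T,
      Φ t ≤ Φ 0 * Real.exp (2 * C * t) ∧ Φ 0 * Real.exp (2 * C * t) ≤ 1 := by
  have hΦ0 : 0 ≤ Φ 0 := hpos 0 ⟨le_rfl, hT.le⟩
  -- the second part of the conclusion, valid for any `t ≤ T`
  have hbnd : ∀ t ≤ T, Φ 0 * Real.exp (2 * C * t) ≤ 1 := by
    intro t ht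
    calc Φ 0 * Real.exp (2 * C * t)
        ≤ Real.exp (-(2 * C * T)) * Real.exp (2 * C * t) := by
          exact mul_le_mul_of_nonneg_right h0 (Real.exp_pos _).le
      _ = Real.exp (2 * C * t - 2 * C * T) := by rw [← Real.exp_add]; ring_nf
      _ ≤ 1 := by
          rw [Real.exp_le_one_iff]
          nlinarith
  -- strict version for `t < T`
  have hbnd' : ∀ t < T, Φ 0 * Real.exp (2 * C * t) < 1 := by
    intro t ht
    calc Φ 0 * Real.exp (2 * C * t)
        ≤ Real.exp (-(2 * C * T)) * Real.exp (2 * C * t) := by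
          exact mul_le_mul_of_nonneg_right h0 (Real.exp_pos _).le
      _ = Real.exp (2 * C * t - 2 * C * T) := by rw [← Real.exp_add]; ring_nf
      _ < 1 := by
          rw [Real.exp_lt_one_iff]
          nlinarith
  -- key Gronwall step: if `Φ ≤ 1` on `[0, b)` then `Φ t ≤ Φ 0 * exp (2Ct)` on `[0, b]`
  have key : ∀ b ∈ Set.Icc 0 T, (∀ u ∈ Set.Ico (0:ℝ) b, Φ u ≤ 1) →
      ∀ t ∈ Set.Icc (0:ℝ) b, Φ t ≤ Φ 0 * Real.exp (2 * C * t) := by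
    intro b hb hsmall t ht
    have hsub : Set.Icc (0:ℝ) b ⊆ Set.Icc 0 T := Set.Icc_subset_Icc le_rfl hb.2
    have hIco : Set.Ico (0:ℝ) b ⊆ Set.Ico 0 T :=
      Set.Ico_subset_Ico le_rfl hb.2
    have H := le_gronwallBound_of_liminf_deriv_right_le
      (f := Φ) (f' := Φ') (δ := Φ 0) (K := 2 * C) (ε := 0) (a := 0) (b := b)
      (fun x hx => ((hdiff x (hsub hx)).continuousWithinAt).mono hsub)
      (fun x hx r hr => by
        have hx' : x ∈ Set.Ico (0:ℝ) T := hIco hx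
        have hd : HasDerivWithinAt Φ (Φ' x) (Set.Ici x) x :=
          (hdiff x ⟨hx'.1, hx'.2.le⟩).mono_of_mem_nhdsWithin (Icc_mem_nhdsGE_of_mem hx')
        exact hd.liminf_right_slope_le hr)
      le_rfl
      (fun x hx => by
        have hxT : x ∈ Set.Icc 0 T := ⟨hx.1, (hIco hx).2.le⟩
        have h1 : Φ x ^ (1 + m) ≤ Φ x := by
          rcases eq_or_lt_of_le (hpos x hxT) with h | h
          · rw [← h, Real.zero_rpow (by positivity)]
          · calc Φ x ^ (1 + m) ≤ Φ x ^ (1:ℝ) :=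
                  Real.rpow_le_rpow_of_exponent_ge h (hsmall x hx) (by linarith)
              _ = Φ x := Real.rpow_one _
        have := hineq x hxT
        nlinarith [hpos x hxT])
      t ht
    rwa [sub_zero, gronwallBound_ε0] at H
  -- bootstrap via sSup
  set s : Set ℝ := {b | b ∈ Set.Icc 0 T ∧ ∀ u ∈ Set.Icc (0:ℝ) b, Φ u ≤ 1} with hs
  have h0s : (0:ℝ) ∈ s := by
    refine ⟨⟨le_rfl, hT.le⟩, fun u hu => ?_⟩
    have : u = 0 := le_antisymm hu.2 hu.1
    subst this
    exact h0.trans (by rw [Real.exp_le_one_iff]; nlinarith)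
  have hne : s.Nonempty := ⟨0, h0s⟩
  have hbdd : BddAbove s := ⟨T, fun x hx => hx.1.2⟩
  set b := sSup s with hbdef
  have hb0 : 0 ≤ b := le_csSup hbdd h0s
  have hbT : b ≤ T := csSup_le hne (fun x hx => hx.1.2)
  have hIcoSmall : ∀ u ∈ Set.Ico (0:ℝ) b, Φ u ≤ 1 := by
    intro u hu
    obtain ⟨t, hts, hut⟩ := exists_lt_of_lt_csSup hne hu.2
    exact hts.2 u ⟨hu.1, hut.le⟩
  have hkeyb := key b ⟨hb0, hbT⟩ hIcoSmall
  have hbs : b ∈ s := by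
    refine ⟨⟨hb0, hbT⟩, fun u hu => ?_⟩
    exact (hkeyb u hu).trans (hbnd u (hu.2.trans hbT))
  -- show b = T
  have hbT' : b = T := by
    by_contra hne'
    have hblt : b < T := lt_of_le_of_ne hbT hne'
    have hΦb : Φ b < 1 := lt_of_le_of_lt (hkeyb b ⟨hb0, le_rfl⟩) (hbnd' b hblt)
    have hcont : ContinuousWithinAt Φ (Set.Icc 0 T) b :=
      (hdiff b ⟨hb0, hbT⟩).continuousWithinAt
    have hev : Φ ⁻¹' Set.Iio 1 ∈ nhdsWithin b (Set.Icc 0 T) :=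
      hcont (Iio_mem_nhds hΦb)
    rw [mem_nhdsWithin] at hev
    obtain ⟨U, hUopen, hbU, hUsub⟩ := hev
    obtain ⟨δ, hδ, hball⟩ := Metric.isOpen_iff.1 hUopen b hbU
    set b' := min T (b + δ / 2) with hb'
    have hbb' : b < b' := lt_min hblt (by linarith)
    have hb's : b' ∈ s := by
      refine ⟨⟨hb0.trans hbb'.le, min_le_left _ _⟩, fun u hu => ?_⟩
      rcases le_or_gt u b with h | h
      · exact hbs.2 u ⟨hu.1, h⟩
      · have huT : u ∈ Set.Icc 0 T := ⟨hu.1, hu.2.trans (min_le_left _ _)⟩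
        have hub : u ≤ b + δ / 2 := hu.2.trans (min_le_right _ _)
        have : u ∈ Metric.ball b δ := by
          rw [Metric.mem_ball, Real.dist_eq, abs_lt]
          constructor <;> nlinarith
        exact le_of_lt (hUsub ⟨hball this, huT⟩)
    exact absurd (le_csSup hbdd hb's) (not_le_of_gt hbb')
  -- conclude
  intro t ht
  rw [hbT'] at hkeyb
  exact ⟨hkeyb t ht, hbnd t ht.2⟩
end
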